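/- Let (α_k)_{k≥1} be a sequence in 𝔻 and (a_k)_{k≥1} a sequence in 𝔻, with φ_k, φ*_k defined by the orthogonal rational function recurrence and a_0 = 1. Then for every n ≥ 1 the following identity of rational functions holds: ϖ_n φ*_n = conj(a_n) ϖ_n φ_n + Σ_{k=0}^{n−1} ( ∏_{j=k+1}^{n} ρ^−_j ) conj(a_k) ϖ_k φ_k. -/

import Mathlib

/-!
Subtracting `conj(a_{n+1})` times the recurrence for `φ_{n+1}` from the one for `φ*_{n+1}`
eliminates `ζ_n φ_n`:
`ϖ_{n+1} φ*_{n+1} = conj(a_{n+1}) ϖ_{n+1} φ_{n+1} + e_{n+1} (1 − |a_{n+1}|²) ϖ_n φ*_n`,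
and `e_{n+1} (1 − |a_{n+1}|²) = ρ⁻_{n+1}`. So `x_n = ϖ_n φ*_n` satisfies a first-order linear
recurrence with inhomogeneity `conj(a_n) ϖ_n φ_n` and starts at `x_0 = conj(a_0) ϖ_0 φ_0`
because `a_0 = 1`; unrolling it is the expansion.
-/

noncomputable section

/-- `ϖ_k(z) = 1 − conj(α_k) z`. -/
def pw (α : ℕ → ℂ) (k : ℕ) (z : ℂ) : ℂ := 1 - (starRingEnd ℂ) (α k) * z

/-- `ϖ*_k(z) = z − α_k`. -/
def pws (α : ℕ → ℂ) (k : ℕ) (z : ℂ) : ℂ := z - α k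

/-- `η_k = (1 − |α_k|²)^{1/2}`. -/
def etaS (α : ℕ → ℂ) (k : ℕ) : ℝ := Real.sqrt (1 - ‖α k‖ ^ 2)

/-- `ρ_k = (1 − |a_k|²)^{1/2}`. -/
def rhoS (a : ℕ → ℂ) (k : ℕ) : ℝ := Real.sqrt (1 - ‖a k‖ ^ 2)

/-- `ρ_k⁺ = (η_{k−1}/η_k) ρ_k`. -/
def rhoP (α a : ℕ → ℂ) (k : ℕ) : ℝ := etaS α (k - 1) / etaS α k * rhoS a k

/-- `ρ_k⁻ = (η_k/η_{k−1}) ρ_k`. -/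
def rhoM (α a : ℕ → ℂ) (k : ℕ) : ℝ := etaS α k / etaS α (k - 1) * rhoS a k

/-- `e_k = η_k/(η_{k−1} ρ_k)`. -/
def eS (α a : ℕ → ℂ) (k : ℕ) : ℝ := etaS α k / (etaS α (k - 1) * rhoS a k)

/-- The pair `(φ_k, φ*_k)` of orthogonal rational functions, defined by the recurrence. -/
def orfFun (α a : ℕ → ℂ) : ℕ → (ℂ → ℂ) × (ℂ → ℂ)
  | 0 => (fun _ => 1, fun _ => 1)
  | k + 1 =>
    (fun z => (eS α a (k + 1) : ℂ) * (pw α k z / pw α (k + 1) z) *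
        ((pws α k z / pw α k z) * (orfFun α a k).1 z + a (k + 1) * (orfFun α a k).2 z),
     fun z => (eS α a (k + 1) : ℂ) * (pw α k z / pw α (k + 1) z) *
        ((starRingEnd ℂ) (a (k + 1)) * (pws α k z / pw α k z) * (orfFun α a k).1 z +
          (orfFun α a k).2 z))

open Finset

theorem eq_add_sum_prod_Icc_of_linear_recurrence {R : Type*} [CommSemiring R] (x b r : ℕ → R)
    (h0 : x 0 = b 0) (n : ℕ) (hrec : ∀ m < n, x (m + 1) = b (m + 1) + r (m + 1) * x m) :
    x n = b n + ∑ k ∈ range n, (∏ j ∈ Icc (k + 1) n, r j) * b k := by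
  induction n with
  | zero => simp [h0]
  | succ n ih =>
    have hsum : ∑ k ∈ range n, (∏ j ∈ Icc (k + 1) (n + 1), r j) * b k =
        r (n + 1) * ∑ k ∈ range n, (∏ j ∈ Icc (k + 1) n, r j) * b k := by
      rw [mul_sum]
      refine sum_congr rfl fun k hk => ?_
      rw [prod_Icc_succ_top (by simpa using (mem_range.1 hk).le)]
      ring
    rw [hrec n n.lt_succ_self, ih fun m hm => hrec m (hm.trans n.lt_succ_self),
      sum_range_succ _ n, hsum, Icc_self, prod_singleton]
    ring

/-- For `‖a k‖ ≥ 1` both sides vanish through the junk value `rhoS a k = 0`. -/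
theorem eS_mul_one_sub_norm_sq (α a : ℕ → ℂ) (k : ℕ) :
    eS α a k * (1 - ‖a k‖ ^ 2) = rhoM α a k := by
  rcases le_or_gt ‖a k‖ 1 with ha | ha
  · have hsq : rhoS a k ^ 2 = 1 - ‖a k‖ ^ 2 := Real.sq_sqrt (by nlinarith [norm_nonneg (a k)])
    rw [eS, rhoM, ← hsq]
    rcases eq_or_ne (rhoS a k) 0 with hρ | hρ
    · simp [hρ]
    field_simp
  · have hρ : rhoS a k = 0 := Real.sqrt_eq_zero'.2 (by nlinarith)
    simp [eS, rhoM, hρ]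

theorem pw_mul_orfFun_snd_succ (α a : ℕ → ℂ) (n : ℕ) (z : ℂ)
    (hw : pw α n z ≠ 0) (hw' : pw α (n + 1) z ≠ 0) :
    pw α (n + 1) z * (orfFun α a (n + 1)).2 z =
      (starRingEnd ℂ) (a (n + 1)) * pw α (n + 1) z * (orfFun α a (n + 1)).1 z +
        (rhoM α a (n + 1) : ℂ) * (pw α n z * (orfFun α a n).2 z) := by
  have hE : (eS α a (n + 1) : ℂ) * (1 - (starRingEnd ℂ) (a (n + 1)) * a (n + 1)) =
      (rhoM α a (n + 1) : ℂ) := by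
    rw [Complex.conj_mul', ← eS_mul_one_sub_norm_sq]
    push_cast
    ring
  simp only [orfFun]
  field_simp
  linear_combination (pw α n z * (orfFun α a n).2 z) * hE

theorem orf_superstar_expansion_general
    (α a : ℕ → ℂ) (ha0 : a 0 = 1)
    (n : ℕ) (z : ℂ) (hz : ∀ k, k ≤ n → pw α k z ≠ 0) :
    pw α n z * (orfFun α a n).2 z =
      (starRingEnd ℂ) (a n) * pw α n z * (orfFun α a n).1 z +
        ∑ k ∈ Finset.range n,
          (∏ j ∈ Finset.Icc (k + 1) n, (rhoM α a j : ℂ)) *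
            (starRingEnd ℂ) (a k) * (pw α k z * (orfFun α a k).1 z) := by
  have h := eq_add_sum_prod_Icc_of_linear_recurrence
    (fun k => pw α k z * (orfFun α a k).2 z)
    (fun k => (starRingEnd ℂ) (a k) * pw α k z * (orfFun α a k).1 z)
    (fun k => (rhoM α a k : ℂ)) (by simp [orfFun, ha0]) n
    fun m hm => pw_mul_orfFun_snd_succ α a m z (hz m hm.le) (hz (m + 1) hm)
  simpa only [mul_assoc] using h

/-- for every `n ≥ 1`, as an identity of rational functions (i.e. at every
point where the denominators `ϖ_k`, `k ≤ n`, do not vanish),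
`ϖ_n φ*_n = conj(a_n) ϖ_n φ_n + Σ_{k=0}^{n−1} (∏_{j=k+1}^{n} ρ⁻_j) conj(a_k) ϖ_k φ_k`. -/
theorem orf_superstar_expansion
    (α a : ℕ → ℂ) (hα0 : α 0 = 0) (ha0 : a 0 = 1)
    (hα : ∀ k, 1 ≤ k → ‖α k‖ < 1) (ha : ∀ k, 1 ≤ k → ‖a k‖ < 1)
    (n : ℕ) (hn : 1 ≤ n) (z : ℂ) (hz : ∀ k, k ≤ n → pw α k z ≠ 0) :
    pw α n z * (orfFun α a n).2 z =
      (starRingEnd ℂ) (a n) * pw α n z * (orfFun α a n).1 z +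
        ∑ k ∈ Finset.range n,
          (∏ j ∈ Finset.Icc (k + 1) n, (rhoM α a j : ℂ)) *
            (starRingEnd ℂ) (a k) * (pw α k z * (orfFun α a k).1 z) :=
  orf_superstar_expansion_general α a ha0 n z hz
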